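/- Let π and σ be representations of Whittaker type of GL_n(F) and GL_m(F), respectively, admitting central characters ω_π and ω_σ, with chosen nonzero ψ-Whittaker vectors ξ_π and ξ_σ. Let a ∈ Fˣ, ψ_a(x) = ψ(ax), and for k ≥ 1 let d_k = diag(1, a, a², …, a^{k−1}) ∈ GL_k(F). Then σ(d_m)ξ_σ and π(d_n)ξ_π are nonzero ψ_a-Whittaker vectors of σ and π, and the ψ_a-Whittaker vector f^{ψ_a}_{σ,π} ∈ σ ∘ π built from them satisfies f^{ψ_a}_{σ,π} = ω_σ(a)^{−n} · ρ(d_{n+m}) f_{σ,π}, where ρ(d_{n+m}) denotes right translation by d_{n+m}, i.e. (ρ(d_{n+m})f)(g) = f(g·d_{n+m}). -/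

import Mathlib

/-!
Common setup: representations of `GL_n` over a finite field `F`, Whittaker vectors,
parabolic induction, the intertwining operator and the Shahidi gamma factor,
Bessel functions, and various auxiliary matrices.
-/

open Matrix
open scoped TensorProduct Classical

noncomputable section

namespace GammaFF

variable (F : Type) [Field F] [Fintype F] [DecidableEq F]

/-- The sum `M 0 1 + M 1 2 + ⋯` of the superdiagonal entries of a square matrix. -/
def supDiag {k : ℕ} (M : Matrix (Fin k) (Fin k) F) : F :=
  ∑ i : Fin k, ∑ j : Fin k, if (j : ℕ) = (i : ℕ) + 1 then M i j else 0

/-- `u ∈ GL_k(F)` is an upper triangular unipotent matrix. -/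
def IsUnip {k : ℕ} (u : GL (Fin k) F) : Prop :=
  (∀ i : Fin k, (u : Matrix (Fin k) (Fin k) F) i i = 1) ∧
  ∀ i j : Fin k, (j : ℕ) < (i : ℕ) → (u : Matrix (Fin k) (Fin k) F) i j = 0

variable {F}

/-- The value at `u` of the extension `ψ(u) = ψ(u_{1,2} + u_{2,3} + ⋯ + u_{k-1,k})`
of the additive character `ψ` to the subgroup `U_k` of upper triangular unipotent
matrices. -/
def psiU {k : ℕ} (ψ : AddChar F ℂ) (u : GL (Fin k) F) : ℂ :=
  ψ (supDiag F (u : Matrix (Fin k) (Fin k) F))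

variable {V W : Type} [AddCommGroup V] [Module ℂ V] [AddCommGroup W] [Module ℂ W]

/-- `v` is a `ψ`-Whittaker vector of the representation `π` of `GL_n(F)`:
`π(u) v = ψ(u) v` for all upper triangular unipotent `u`. -/
def IsWhittakerVector {n : ℕ} (π : Representation ℂ (GL (Fin n) F) V) (ψ : AddChar F ℂ)
    (v : V) : Prop :=
  ∀ u : GL (Fin n) F, IsUnip F u → π u v = psiU ψ u • v

/-- `π` is generic: it has a nonzero `ψ`-Whittaker vector. -/
def IsGeneric {n : ℕ} (π : Representation ℂ (GL (Fin n) F) V) (ψ : AddChar F ℂ) : Prop :=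
  ∃ v : V, v ≠ 0 ∧ IsWhittakerVector π ψ v

/-- `π` is of Whittaker type: its `ψ`-Whittaker vectors span a one-dimensional
subspace. -/
def WhittakerType {n : ℕ} (π : Representation ℂ (GL (Fin n) F) V) (ψ : AddChar F ℂ) : Prop :=
  ∃ v : V, v ≠ 0 ∧ IsWhittakerVector π ψ v ∧
    ∀ w : V, IsWhittakerVector π ψ w → ∃ c : ℂ, w = c • v

/-- Isomorphism of two representations of a group `G`. -/
def RepIso {G : Type} [Group G] (π : Representation ℂ G V) (τ : Representation ℂ G W) : Prop :=
  ∃ φ : V ≃ₗ[ℂ] W, ∀ g v, φ (π g v) = τ g (φ v)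

/-- `π` is (isomorphic to) a subrepresentation of `τ`. -/
def IsSubrep {G : Type} [Group G] (π : Representation ℂ G V) (τ : Representation ℂ G W) : Prop :=
  ∃ φ : V →ₗ[ℂ] W, Function.Injective φ ∧ ∀ g v, φ (π g v) = τ g (φ v)

/-- `π` is an irreducible representation. -/
def IsIrreducibleRep {G : Type} [Group G] (π : Representation ℂ G V) : Prop :=
  Nontrivial V ∧ ∀ U : Submodule ℂ V, (∀ g, ∀ v ∈ U, π g v ∈ U) → U = ⊥ ∨ U = ⊤

/-- The order preserving identification of `Fin a ⊕ Fin b` with `Fin k` when `a + b = k`. -/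
def blockEquiv {a b k : ℕ} (h : a + b = k) : Fin a ⊕ Fin b ≃ Fin k :=
  finSumFinEquiv.trans (finCongr h)

variable (F)

/-- The `k × k` block matrix `(A B; C D)` with diagonal blocks of sizes `a`, `b`,
`a + b = k`. -/
def bmat {a b k : ℕ} (h : a + b = k) (A : Matrix (Fin a) (Fin a) F) (B : Matrix (Fin a) (Fin b) F)
    (C : Matrix (Fin b) (Fin a) F) (D : Matrix (Fin b) (Fin b) F) : Matrix (Fin k) (Fin k) F :=
  (Matrix.fromBlocks A B C D).submatrix (blockEquiv h).symm (blockEquiv h).symm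

lemma bmat_mul {a b k : ℕ} (h : a + b = k) (A A' : Matrix (Fin a) (Fin a) F)
    (B B' : Matrix (Fin a) (Fin b) F) (C C' : Matrix (Fin b) (Fin a) F)
    (D D' : Matrix (Fin b) (Fin b) F) :
    bmat F h A B C D * bmat F h A' B' C' D' =
      bmat F h (A * A' + B * C') (A * B' + B * D') (C * A' + D * C') (C * B' + D * D') := by
  unfold bmat
  rw [Matrix.submatrix_mul_equiv _ _ _ ((blockEquiv h).symm) _, Matrix.fromBlocks_multiply]

lemma bmat_one {a b k : ℕ} (h : a + b = k) :
    bmat F h (1 : Matrix (Fin a) (Fin a) F) 0 0 (1 : Matrix (Fin b) (Fin b) F) = 1 := by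
  unfold bmat
  rw [Matrix.fromBlocks_one, Matrix.submatrix_one_equiv]

/-- The element `(A B; 0 D)` of the standard parabolic subgroup `P_{a,b} ≤ GL_k(F)`
(`a + b = k`), where `A ∈ GL_a(F)`, `D ∈ GL_b(F)`, and `B` is an arbitrary `a × b`
matrix.  Every element of `P_{a,b}` has this form. -/
def pElt {a b k : ℕ} (h : a + b = k) (A : GL (Fin a) F) (B : Matrix (Fin a) (Fin b) F)
    (D : GL (Fin b) F) : GL (Fin k) F where
  val := bmat F h (A : Matrix (Fin a) (Fin a) F) B 0 (D : Matrix (Fin b) (Fin b) F)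
  inv := bmat F h ((A⁻¹ : GL (Fin a) F) : Matrix (Fin a) (Fin a) F)
    (-(((A⁻¹ : GL (Fin a) F) : Matrix (Fin a) (Fin a) F) * B *
       ((D⁻¹ : GL (Fin b) F) : Matrix (Fin b) (Fin b) F))) 0
    ((D⁻¹ : GL (Fin b) F) : Matrix (Fin b) (Fin b) F)
  val_inv := by
    rw [bmat_mul]
    have h1 : (A : Matrix (Fin a) (Fin a) F) * ((A⁻¹ : GL (Fin a) F) : Matrix (Fin a) (Fin a) F)
        + B * (0 : Matrix (Fin b) (Fin a) F) = 1 := by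
      rw [Matrix.mul_zero, add_zero]; exact Units.mul_inv A
    have h2 : (A : Matrix (Fin a) (Fin a) F) *
        -(((A⁻¹ : GL (Fin a) F) : Matrix (Fin a) (Fin a) F) * B *
          ((D⁻¹ : GL (Fin b) F) : Matrix (Fin b) (Fin b) F)) +
        B * ((D⁻¹ : GL (Fin b) F) : Matrix (Fin b) (Fin b) F) = 0 := by
      rw [Matrix.mul_neg, ← Matrix.mul_assoc, ← Matrix.mul_assoc, Units.mul_inv,
        Matrix.one_mul, neg_add_cancel]
    have h3 : (0 : Matrix (Fin b) (Fin a) F) * ((A⁻¹ : GL (Fin a) F) : Matrix (Fin a) (Fin a) F)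
        + (D : Matrix (Fin b) (Fin b) F) * (0 : Matrix (Fin b) (Fin a) F) = 0 := by
      simp
    have h4 : (0 : Matrix (Fin b) (Fin a) F) *
        -(((A⁻¹ : GL (Fin a) F) : Matrix (Fin a) (Fin a) F) * B *
          ((D⁻¹ : GL (Fin b) F) : Matrix (Fin b) (Fin b) F)) +
        (D : Matrix (Fin b) (Fin b) F) * ((D⁻¹ : GL (Fin b) F) : Matrix (Fin b) (Fin b) F) = 1 := by
      rw [Matrix.zero_mul, zero_add]; exact Units.mul_inv D
    rw [h1, h2, h3, h4, bmat_one]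
  inv_val := by
    rw [bmat_mul]
    have h1 : ((A⁻¹ : GL (Fin a) F) : Matrix (Fin a) (Fin a) F) * (A : Matrix (Fin a) (Fin a) F)
        + -(((A⁻¹ : GL (Fin a) F) : Matrix (Fin a) (Fin a) F) * B *
          ((D⁻¹ : GL (Fin b) F) : Matrix (Fin b) (Fin b) F)) * (0 : Matrix (Fin b) (Fin a) F) = 1 := by
      rw [Matrix.mul_zero, add_zero]; exact Units.inv_mul A
    have h2 : ((A⁻¹ : GL (Fin a) F) : Matrix (Fin a) (Fin a) F) * B +
        -(((A⁻¹ : GL (Fin a) F) : Matrix (Fin a) (Fin a) F) * B *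
          ((D⁻¹ : GL (Fin b) F) : Matrix (Fin b) (Fin b) F)) * (D : Matrix (Fin b) (Fin b) F) = 0 := by
      rw [Matrix.neg_mul, Matrix.mul_assoc
        (((A⁻¹ : GL (Fin a) F) : Matrix (Fin a) (Fin a) F) * B) _ _, Units.inv_mul,
        Matrix.mul_one, add_neg_cancel]
    have h3 : (0 : Matrix (Fin b) (Fin a) F) * (A : Matrix (Fin a) (Fin a) F)
        + ((D⁻¹ : GL (Fin b) F) : Matrix (Fin b) (Fin b) F) * (0 : Matrix (Fin b) (Fin a) F) = 0 := by
      simp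
    have h4 : (0 : Matrix (Fin b) (Fin a) F) * B +
        ((D⁻¹ : GL (Fin b) F) : Matrix (Fin b) (Fin b) F) * (D : Matrix (Fin b) (Fin b) F) = 1 := by
      rw [Matrix.zero_mul, zero_add]; exact Units.inv_mul D
    rw [h1, h2, h3, h4, bmat_one]

/-- The permutation matrix of `e` (with `1` at the entries `(i, e i)`), as an element
of `GL_k(F)`. -/
def permGL {k : ℕ} (e : Equiv.Perm (Fin k)) : GL (Fin k) F where
  val := (e.toPEquiv).toMatrix
  inv := (e.symm.toPEquiv).toMatrix
  val_inv := by
    rw [← PEquiv.toMatrix_trans, ← Equiv.toPEquiv_trans, Equiv.self_trans_symm,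
      Equiv.toPEquiv_refl, PEquiv.toMatrix_refl]
  inv_val := by
    rw [← PEquiv.toMatrix_trans, ← Equiv.toPEquiv_trans, Equiv.symm_trans_self,
      Equiv.toPEquiv_refl, PEquiv.toMatrix_refl]

/-- The block permutation matrix in `GL_k(F)` (`a + b = k`), whose upper right `a × a`
block is `I_a` and whose lower left `b × b` block is `I_b` (all other entries `0`).
In the notation of the paper, `wSwap F a b h` is the Weyl element `w_{b,a}`. -/
def wSwap (a b k : ℕ) (h : a + b = k) : GL (Fin k) F :=
  permGL F ((blockEquiv h).symm.trans ((Equiv.sumComm (Fin a) (Fin b)).trans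
    (blockEquiv ((add_comm b a).trans h))))

variable {F}

/-- The space of the parabolic induction `σ ∘ π` (`σ` on `GL_m(F)`, `π` on `GL_n(F)`):
functions `f : GL_{m+n}(F) → W ⊗ V` with `f(pg) = (σ ⊠ π)(p) f(g)` for all
`p ∈ P_{m,n}`. -/
def IndSpace {m n k : ℕ} (h : m + n = k) (σ : Representation ℂ (GL (Fin m) F) W)
    (π : Representation ℂ (GL (Fin n) F) V) :
    Submodule ℂ (GL (Fin k) F → W ⊗[ℂ] V) where
  carrier := {f | ∀ (A : GL (Fin m) F) (B : Matrix (Fin m) (Fin n) F) (D : GL (Fin n) F)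
    (g : GL (Fin k) F), f (pElt F h A B D * g) = TensorProduct.map (σ A) (π D) (f g)}
  add_mem' := by
    intro f f' hf hf' A B D g
    simp only [Pi.add_apply, hf A B D g, hf' A B D g, map_add]
  zero_mem' := by intro A B D g; simp
  smul_mem' := by
    intro c f hf A B D g
    simp only [Pi.smul_apply, hf A B D g, LinearMap.map_smul]

/-- The parabolic induction `σ ∘ π` as a representation of `GL_{m+n}(F)`, acting by
right translation on `IndSpace`. -/
def IndRep {m n k : ℕ} (h : m + n = k) (σ : Representation ℂ (GL (Fin m) F) W)
    (π : Representation ℂ (GL (Fin n) F) V) :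
    Representation ℂ (GL (Fin k) F) (IndSpace h σ π) where
  toFun g := (LinearMap.funLeft ℂ (W ⊗[ℂ] V) (fun x => x * g)).restrict
    (fun f hf => by
      intro A B D x
      simp only [LinearMap.funLeft_apply]
      rw [mul_assoc]
      exact hf A B D (x * g))
  map_one' := by
    apply LinearMap.ext
    rintro ⟨f, hf⟩
    apply Subtype.ext
    funext x
    simp [LinearMap.restrict_apply]
  map_mul' := by
    intro g₁ g₂
    apply LinearMap.ext
    rintro ⟨f, hf⟩
    apply Subtype.ext
    funext x
    first
      | (simp [LinearMap.restrict_apply, Module.End.mul_apply, mul_assoc]; done)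
      | exact congrArg f (mul_assoc x g₁ g₂).symm
      | (simp only [LinearMap.restrict_coe_apply, LinearMap.funLeft_apply, Function.comp_apply]; rw [mul_assoc])

/-- `f` is the `ψ`-Whittaker vector `f_{σ,π}` of the parabolic induction `σ ∘ π`
attached to the Whittaker vectors `ξσ`, `ξπ`: it lies in the induced space, it is a
`ψ`-Whittaker vector for right translation, it is supported on the double coset
`P_{m,n} w_{n,m} U_{m+n}`, and `f(w_{n,m}) = ξσ ⊗ ξπ`. -/
def IsInducedWhittakerVector {m n k : ℕ} (h : m + n = k)
    (σ : Representation ℂ (GL (Fin m) F) W) (π : Representation ℂ (GL (Fin n) F) V)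
    (ψ : AddChar F ℂ) (ξσ : W) (ξπ : V) (f : GL (Fin k) F → W ⊗[ℂ] V) : Prop :=
  f ∈ IndSpace h σ π ∧
  (∀ u : GL (Fin k) F, IsUnip F u → ∀ g, f (g * u) = psiU ψ u • f g) ∧
  f (wSwap F m n k h) = ξσ ⊗ₜ[ℂ] ξπ ∧
  ∀ g, f g ≠ 0 → ∃ (A : GL (Fin m) F) (B : Matrix (Fin m) (Fin n) F) (D : GL (Fin n) F)
    (u : GL (Fin k) F), IsUnip F u ∧ g = pElt F h A B D * wSwap F m n k h * u

/-- The intertwining operator `U_{σ,π} : σ ∘ π → π ∘ σ`,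
`(U_{σ,π} f)(g) = Σ_{u ∈ N_{n,m}} sw(f(w_{n,m} u g))`, where `sw` is the swap of the
two tensor factors. -/
def Uop {m n k : ℕ} (h : m + n = k) (f : GL (Fin k) F → W ⊗[ℂ] V) :
    GL (Fin k) F → V ⊗[ℂ] W := fun g =>
  ∑ X : Matrix (Fin n) (Fin m) F,
    (TensorProduct.comm ℂ W V)
      (f (wSwap F m n k h * pElt F ((add_comm n m).trans h) (1 : GL (Fin n) F) X (1 : GL (Fin m) F) * g))

/-- `γ` is the Shahidi gamma factor `Γ(π × σ, ψ)` of `π` (a representation of `GL_n(F)`)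
and `σ` (a representation of `GL_m(F)`): for some (equivalently, by uniqueness of
Whittaker vectors for representations of Whittaker type, any) choice of nonzero
`ψ`-Whittaker vectors `ξπ`, `ξσ`, the intertwining operator `U_{σ,π}` sends the
Whittaker vector `f_{σ,π}` of `σ ∘ π` to `γ • f_{π,σ}`. -/
def IsShahidiGamma {n m : ℕ} (ψ : AddChar F ℂ) (π : Representation ℂ (GL (Fin n) F) V)
    (σ : Representation ℂ (GL (Fin m) F) W) (γ : ℂ) : Prop :=
  ∃ (ξπ : V) (ξσ : W) (fσπ : GL (Fin (m + n)) F → W ⊗[ℂ] V)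
    (fπσ : GL (Fin (m + n)) F → V ⊗[ℂ] W),
    ξπ ≠ 0 ∧ ξσ ≠ 0 ∧ IsWhittakerVector π ψ ξπ ∧ IsWhittakerVector σ ψ ξσ ∧
    IsInducedWhittakerVector rfl σ π ψ ξσ ξπ fσπ ∧
    IsInducedWhittakerVector (add_comm n m) π σ ψ ξπ ξσ fπσ ∧
    ∀ g, Uop rfl fσπ g = γ • fπσ g

/-- The projection `P_ψ = |U_n|⁻¹ Σ_{u ∈ U_n} ψ(u)⁻¹ π(u)` onto the subspace of
`ψ`-Whittaker vectors. -/
def besselOp {n : ℕ} (π : Representation ℂ (GL (Fin n) F) V) (ψ : AddChar F ℂ) :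
    V →ₗ[ℂ] V :=
  (Fintype.card {u : GL (Fin n) F // IsUnip F u} : ℂ)⁻¹ •
    ∑ u : {u : GL (Fin n) F // IsUnip F u}, (psiU ψ (u : GL (Fin n) F))⁻¹ • (π (u : GL (Fin n) F))

/-- The (normalized) Bessel function `J_{π,ψ}(g) = tr(P_ψ ∘ π(g))` of an irreducible
generic representation `π`. -/
def bessel {n : ℕ} (π : Representation ℂ (GL (Fin n) F) V) (ψ : AddChar F ℂ)
    (g : GL (Fin n) F) : ℂ :=
  LinearMap.trace ℂ V (besselOp π ψ ∘ₗ π g)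

variable (F)

/-- `T` is a set of representatives for the left cosets `U_n\GL_n(F)`. -/
def IsTransversal {n : ℕ} (T : Finset (GL (Fin n) F)) : Prop :=
  ∀ g : GL (Fin n) F, ∃! t, t ∈ T ∧ ∃ u, IsUnip F u ∧ g = u * t

/-- The scalar matrix `a · I_n` as an element of `GL_n(F)`. -/
def scalarGL (n : ℕ) (a : Fˣ) : GL (Fin n) F :=
  Units.map (Matrix.scalar (Fin n)).toMonoidHom a

variable {F}

/-- The representation `π` has central character `ω`. -/
def HasCentralCharacter {n : ℕ} (π : Representation ℂ (GL (Fin n) F) V) (ω : Fˣ → ℂˣ) : Prop :=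
  ∀ (a : Fˣ) (v : V), π (scalarGL F n a) v = (ω a : ℂ) • v

/-- `π` is a cuspidal representation of `GL_n(F)`: for every decomposition `n = a + b`
with `a, b ≥ 1`, the only vector invariant under the unipotent radical `N_{a,b}` is `0`.
(This is equivalent to the corresponding condition for all compositions of `n` with at
least two parts, since the unipotent radical attached to any such composition contains
the unipotent radical `N_{a,b}` with `a` its first part.) -/
def IsCuspidal {n : ℕ} (π : Representation ℂ (GL (Fin n) F) V) : Prop :=
  ∀ (a b : ℕ) (h : a + b = n), a ≠ 0 → b ≠ 0 →
    ∀ v : V, (∀ X : Matrix (Fin a) (Fin b) F, π (pElt F h 1 X 1) v = v) → v = 0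

variable (F)

/-- The group homomorphism `g ↦ ᵗg⁻¹` of `GL_k(F)`. -/
def glTransposeInv {k : ℕ} : GL (Fin k) F →* GL (Fin k) F where
  toFun g :=
    ⟨((g⁻¹ : GL (Fin k) F) : Matrix (Fin k) (Fin k) F)ᵀ, ((g : GL (Fin k) F) : Matrix (Fin k) (Fin k) F)ᵀ,
      by rw [← Matrix.transpose_mul, Units.mul_inv, Matrix.transpose_one],
      by rw [← Matrix.transpose_mul, Units.inv_mul, Matrix.transpose_one]⟩
  map_one' := by
    apply Units.ext
    simp
  map_mul' := by
    intro g h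
    apply Units.ext
    show (((g * h)⁻¹ : GL (Fin k) F) : Matrix (Fin k) (Fin k) F)ᵀ = _
    rw [_root_.mul_inv_rev]
    show ((((h⁻¹ : GL (Fin k) F) : Matrix (Fin k) (Fin k) F) *
      ((g⁻¹ : GL (Fin k) F) : Matrix (Fin k) (Fin k) F))ᵀ) = _
    rw [Matrix.transpose_mul]
    rfl

/-- The isomorphism `GL_a(F) ≅ GL_b(F)` induced by an equality `a = b`. -/
def glCongr {a b : ℕ} (h : a = b) : GL (Fin a) F ≃* GL (Fin b) F :=
  Units.mapEquiv ((Matrix.reindexAlgEquiv F F (finCongr h)).toRingEquiv.toMulEquiv)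

/-- The diagonal matrix with (invertible) diagonal entries `d`, as an element of
`GL_k(F)`. -/
def diagGL {k : ℕ} (d : Fin k → Fˣ) : GL (Fin k) F where
  val := Matrix.diagonal fun i => (d i : F)
  inv := Matrix.diagonal fun i => (((d i)⁻¹ : Fˣ) : F)
  val_inv := by
    rw [Matrix.diagonal_mul_diagonal]
    have : (fun i => ((d i : F) * (((d i)⁻¹ : Fˣ) : F))) = fun _ => (1 : F) :=
      funext fun i => Units.mul_inv _
    rw [this, Matrix.diagonal_one]
  inv_val := by
    rw [Matrix.diagonal_mul_diagonal]
    have : (fun i => ((((d i)⁻¹ : Fˣ) : F) * (d i : F))) = fun _ => (1 : F) :=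
      funext fun i => Units.inv_mul _
    rw [this, Matrix.diagonal_one]

/-- The matrix `σ_c ∈ GL_n(F)` whose upper right `(n-1) × (n-1)` block is `I_{n-1}`
and whose `(n,1)` entry is `c` (all other entries `0`). -/
def sigmaGL (n : ℕ) (c : Fˣ) : GL (Fin n) F :=
  diagGL F (fun i => if (i : ℕ) = n - 1 then c else 1) * permGL F (finRotate n)

/-- The matrix `τ_b ∈ GL_n(F)` whose `(1,n)` entry is `b` and whose lower left
`(n-1) × (n-1)` block is `I_{n-1}` (all other entries `0`). -/
def tauGL (n : ℕ) (b : Fˣ) : GL (Fin n) F :=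
  (permGL F (finRotate n))⁻¹ * diagGL F (fun i => if (i : ℕ) = n - 1 then b else 1)

/-- The diagonal matrix `d_k = diag(1, a, a², …, a^{k-1}) ∈ GL_k(F)`. -/
def dPow (k : ℕ) (a : Fˣ) : GL (Fin k) F :=
  diagGL F (fun i => a ^ (i : ℕ))

/-- The Fourier transform `F_ψ φ(y) = Σ_{x ∈ Fⁿ} φ(x) ψ(⟨x, y⟩)` of `φ : Fⁿ → ℂ`. -/
def fourier (ψ : AddChar F ℂ) {n : ℕ} (φ : (Fin n → F) → ℂ) : (Fin n → F) → ℂ :=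
  fun y => ∑ x : Fin n → F, φ x * ψ (∑ i, x i * y i)

/-- A multiplicative character `χ` of `Fˣ`, viewed as a representation of
`GL_1(F)` on `ℂ`. -/
def charRep (χ : Fˣ →* ℂˣ) : Representation ℂ (GL (Fin 1) F) ℂ where
  toFun g := ((χ (Matrix.GeneralLinearGroup.det g) : ℂ) • LinearMap.id : ℂ →ₗ[ℂ] ℂ)
  map_one' := by
    show (χ (Matrix.GeneralLinearGroup.det (1 : GL (Fin 1) F)) : ℂ) • LinearMap.id = 1
    rw [_root_.map_one, _root_.map_one, Units.val_one, one_smul]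
    rfl
  map_mul' := by
    intro g h
    apply LinearMap.ext
    intro x
    simp [Module.End.mul_apply, smul_smul, mul_comm]

/-- The equivalence `Σ i, Fin (ns i) ≃ Fin (ns 0) ⊕ Σ i, Fin (ns i.succ)`. -/
def sigmaSuccEquiv (r : ℕ) (ns : Fin (r + 1) → ℕ) :
    (Σ i : Fin (r + 1), Fin (ns i)) ≃ (Fin (ns 0) ⊕ Σ i : Fin r, Fin (ns i.succ)) where
  toFun x := Fin.cases (motive := fun i => Fin (ns i) → (Fin (ns 0) ⊕ Σ i : Fin r, Fin (ns i.succ)))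
    (fun y => Sum.inl y) (fun i y => Sum.inr ⟨i, y⟩) x.1 x.2
  invFun := Sum.elim (fun y => ⟨0, y⟩) (fun p => ⟨p.1.succ, p.2⟩)
  left_inv := by
    rintro ⟨i, y⟩
    induction i using Fin.cases <;> simp
  right_inv := by
    rintro (y | ⟨i, y⟩) <;> simp

/-- The order preserving equivalence `Σ i, Fin (ns i) ≃ Fin (∑ i, ns i)`, sending
`⟨i, x⟩` to `ns 0 + ⋯ + ns (i-1) + x` (blocks in their natural order). -/
def finSigmaEquiv : (r : ℕ) → (ns : Fin r → ℕ) → (Σ i : Fin r, Fin (ns i)) ≃ Fin (∑ i, ns i)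
  | 0, ns =>
    (Equiv.equivOfIsEmpty _ (Fin 0)).trans
      (finCongr (show (0 : ℕ) = ∑ i : Fin 0, ns i by simp))
  | (r + 1), ns =>
    (sigmaSuccEquiv r ns).trans
      ((Equiv.sumCongr (Equiv.refl (Fin (ns 0))) (finSigmaEquiv r (fun i => ns i.succ))).trans
        (finSumFinEquiv.trans (finCongr (Fin.sum_univ_succ ns).symm)))

/-- The index in `Fin (∑ j, ns j)` of the `x`-th element of the `i`-th block. -/
def blockIdx {r : ℕ} (ns : Fin r → ℕ) (i : Fin r) (x : Fin (ns i)) : Fin (∑ j, ns j) :=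
  finSigmaEquiv r ns ⟨i, x⟩

variable {F}
variable {r : ℕ} {ns : Fin r → ℕ} {Vs : Fin r → Type}
  [∀ i, AddCommGroup (Vs i)] [∀ i, Module ℂ (Vs i)]

/-- The space of the iterated parabolic induction `τ₁ ∘ ⋯ ∘ τ_r`: functions
`f : GL_{n₁ + ⋯ + n_r}(F) → V₁ ⊗ ⋯ ⊗ V_r` such that
`f(pg) = (τ₁(d₁) ⊗ ⋯ ⊗ τ_r(d_r)) f(g)` whenever `p` is block upper triangular with
diagonal blocks `d i ∈ GL_{n_i}(F)`. -/
def MultiIndSpace (τ : ∀ i, Representation ℂ (GL (Fin (ns i)) F) (Vs i)) :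
    Submodule ℂ (GL (Fin (∑ j, ns j)) F → ⨂[ℂ] i, Vs i) where
  carrier := {f | ∀ (p : GL (Fin (∑ j, ns j)) F) (d : ∀ i, GL (Fin (ns i)) F),
    (∀ (i i' : Fin r), i' < i → ∀ (x : Fin (ns i)) (x' : Fin (ns i')),
      (p : Matrix (Fin (∑ j, ns j)) (Fin (∑ j, ns j)) F) (blockIdx ns i x) (blockIdx ns i' x') = 0) →
    (∀ (i : Fin r) (x x' : Fin (ns i)),
      (p : Matrix (Fin (∑ j, ns j)) (Fin (∑ j, ns j)) F) (blockIdx ns i x) (blockIdx ns i x')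
        = ((d i : Matrix (Fin (ns i)) (Fin (ns i)) F)) x x') →
    ∀ g, f (p * g) = PiTensorProduct.map (fun i => τ i (d i)) (f g)}
  add_mem' := by
    intro f f' hf hf' p d h1 h2 g
    simp only [Pi.add_apply, hf p d h1 h2 g, hf' p d h1 h2 g, map_add]
  zero_mem' := by intro p d h1 h2 g; simp
  smul_mem' := by
    intro c f hf p d h1 h2 g
    simp only [Pi.smul_apply, hf p d h1 h2 g, LinearMap.map_smul]

/-- The iterated parabolic induction `τ₁ ∘ ⋯ ∘ τ_r` as a representation of
`GL_{n₁ + ⋯ + n_r}(F)`, acting by right translation. -/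
def MultiIndRep (τ : ∀ i, Representation ℂ (GL (Fin (ns i)) F) (Vs i)) :
    Representation ℂ (GL (Fin (∑ j, ns j)) F) (MultiIndSpace τ) where
  toFun g := (LinearMap.funLeft ℂ (⨂[ℂ] i, Vs i) (fun x => x * g)).restrict
    (fun f hf => by
      intro p d h1 h2 x
      simp only [LinearMap.funLeft_apply]
      rw [mul_assoc]
      exact hf p d h1 h2 (x * g))
  map_one' := by
    apply LinearMap.ext
    rintro ⟨f, hf⟩
    apply Subtype.ext
    funext x
    simp [LinearMap.restrict_apply]
  map_mul' := by
    intro g₁ g₂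
    apply LinearMap.ext
    rintro ⟨f, hf⟩
    apply Subtype.ext
    funext x
    first
      | (simp [LinearMap.restrict_apply, Module.End.mul_apply, mul_assoc]; done)
      | exact congrArg f (mul_assoc x g₁ g₂).symm
      | (simp only [LinearMap.restrict_coe_apply, LinearMap.funLeft_apply, Function.comp_apply]; rw [mul_assoc])

end GammaFF

/-!
Conjugation by `d_k = diag(1, a, …, a^{k-1})` scales the superdiagonal of a unipotent matrix by
`a`, so it turns `ψ`-Whittaker vectors into `ψ_a`-Whittaker vectors and preserves `U_k`.
Hence `g ↦ f_{σ,π}(g d_{m+n})` is again `ψ_a`-Whittaker, lies in `σ ∘ π` and is supported on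
`P_{m,n} w_{n,m} U_{m+n}`. Since `w_{n,m} d_{m+n} = diag(aⁿ d_m, d_n) w_{n,m}`, its value at
`w_{n,m}` is `ω_σ(a)ⁿ σ(d_m)ξ_σ ⊗ π(d_n)ξ_π`. An induced Whittaker vector is determined by its
value at `w_{n,m}`, which gives the identity.
-/

namespace GammaFF

open Matrix
open scoped TensorProduct Classical

section Torus

variable {F : Type} [Field F]

lemma diagGL_coe {k : ℕ} (d : Fin k → Fˣ) :
    ((diagGL F d : GL (Fin k) F) : Matrix (Fin k) (Fin k) F) = diagonal fun i => (d i : F) :=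
  rfl

lemma diagGL_mul {k : ℕ} (d d' : Fin k → Fˣ) : diagGL F d * diagGL F d' = diagGL F (d * d') :=
  Units.ext <| by simp [diagGL_coe, diagonal_mul_diagonal]

lemma dPow_inv {k : ℕ} (a : Fˣ) : (dPow F k a)⁻¹ = dPow F k a⁻¹ := by
  rw [inv_eq_iff_mul_eq_one, dPow, dPow, diagGL_mul]
  exact Units.ext <| by simp [diagGL_coe]

lemma conj_dPow_apply {k : ℕ} (a : Fˣ) (u : GL (Fin k) F) (i j : Fin k) :
    (((dPow F k a)⁻¹ * u * dPow F k a : GL (Fin k) F) : Matrix (Fin k) (Fin k) F) i j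
      = ((a : F) ^ (i : ℕ))⁻¹ * (u : Matrix (Fin k) (Fin k) F) i j * (a : F) ^ (j : ℕ) := by
  rw [dPow_inv]
  simp [dPow, diagGL_coe, mul_diagonal, diagonal_mul]

lemma IsUnip.conj_dPow {k : ℕ} {u : GL (Fin k) F} (hu : IsUnip F u) (a : Fˣ) :
    IsUnip F ((dPow F k a)⁻¹ * u * dPow F k a) := by
  refine ⟨fun i => ?_, fun i j hij => ?_⟩
  · rw [conj_dPow_apply, hu.1 i, mul_one, inv_mul_cancel₀ (pow_ne_zero _ a.ne_zero)]
  · rw [conj_dPow_apply, hu.2 i j hij, mul_zero, zero_mul]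

lemma psiU_conj_dPow {k : ℕ} (ψ : AddChar F ℂ) (a : Fˣ) (u : GL (Fin k) F) :
    psiU ψ ((dPow F k a)⁻¹ * u * dPow F k a) = psiU (ψ.mulShift (a : F)) u := by
  rw [psiU, psiU, AddChar.mulShift_apply, supDiag, supDiag, Finset.mul_sum]
  congr 1
  refine Finset.sum_congr rfl fun i _ => ?_
  rw [Finset.mul_sum]
  refine Finset.sum_congr rfl fun j _ => ?_
  split_ifs with hj
  · rw [conj_dPow_apply, hj, pow_succ]
    field_simp
  · rw [mul_zero]

lemma permGL_mul_diagGL {k : ℕ} (e : Equiv.Perm (Fin k)) (d : Fin k → Fˣ) :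
    permGL F e * diagGL F d = diagGL F (d ∘ e) * permGL F e := by
  refine Units.ext ?_
  change e.toPEquiv.toMatrix * diagonal _ = diagonal _ * e.toPEquiv.toMatrix
  rw [PEquiv.toMatrix_toPEquiv_mul, PEquiv.mul_toMatrix_toPEquiv]
  ext i j
  by_cases hij : e i = j
  · subst hij
    simp
  · rw [submatrix_apply, submatrix_apply, id_eq, id_eq, diagonal_apply_ne _ hij,
      diagonal_apply_ne _ (by rwa [ne_eq, Equiv.eq_symm_apply])]

lemma scalarGL_pow_mul_dPow (m n : ℕ) (a : Fˣ) :
    scalarGL F m (a ^ n) * dPow F m a = diagGL F fun x => a ^ (n + (x : ℕ)) :=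
  Units.ext <| by simp [scalarGL, dPow, diagGL_coe, pow_add, diagonal_pow, diagonal_mul_diagonal]

lemma apply_mul_mul_dPow_eq_psiU_mulShift_smul {k : ℕ} {X : Type} [AddCommGroup X] [Module ℂ X]
    {ψ : AddChar F ℂ} {φ : GL (Fin k) F → X}
    (hφ : ∀ u : GL (Fin k) F, IsUnip F u → ∀ g, φ (g * u) = psiU ψ u • φ g) (a : Fˣ)
    {u : GL (Fin k) F} (hu : IsUnip F u) (g : GL (Fin k) F) :
    φ (g * u * dPow F k a) = psiU (ψ.mulShift (a : F)) u • φ (g * dPow F k a) := by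
  have hconj : g * u * dPow F k a = g * dPow F k a * ((dPow F k a)⁻¹ * u * dPow F k a) := by
    group
  rw [hconj, hφ _ (hu.conj_dPow a), psiU_conj_dPow]

variable {V : Type} [AddCommGroup V] [Module ℂ V]

lemma IsWhittakerVector.apply_dPow {k : ℕ} {π : Representation ℂ (GL (Fin k) F) V}
    {ψ : AddChar F ℂ} {ξ : V} (hξ : IsWhittakerVector π ψ ξ) (a : Fˣ) :
    IsWhittakerVector π (ψ.mulShift (a : F)) (π (dPow F k a) ξ) := by
  intro u hu
  have hconj : u * dPow F k a = dPow F k a * ((dPow F k a)⁻¹ * u * dPow F k a) := by group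
  rw [← Module.End.mul_apply, ← map_mul, hconj, map_mul, Module.End.mul_apply,
    hξ _ (hu.conj_dPow a), map_smul, psiU_conj_dPow]

lemma HasCentralCharacter.apply_scalarGL_pow {k : ℕ} {π : Representation ℂ (GL (Fin k) F) V}
    {ω : Fˣ → ℂˣ} (hω : HasCentralCharacter π ω) (a : Fˣ) (t : ℕ) (v : V) :
    π (scalarGL F k (a ^ t)) v = (ω a : ℂ) ^ t • v := by
  induction t generalizing v with
  | zero => simp [scalarGL]
  | succ t ih =>
    have hsplit : scalarGL F k (a ^ (t + 1)) = scalarGL F k (a ^ t) * scalarGL F k a := by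
      simp [scalarGL, pow_succ]
    rw [hsplit, map_mul, Module.End.mul_apply, hω a v, map_smul, ih, smul_smul, pow_succ']

end Torus

section Blocks

variable {F : Type} [Field F] [Fintype F] [DecidableEq F]

lemma pElt_mul {a b k : ℕ} (h : a + b = k) (A A' : GL (Fin a) F)
    (B B' : Matrix (Fin a) (Fin b) F) (D D' : GL (Fin b) F) :
    pElt F h A B D * pElt F h A' B' D' =
      pElt F h (A * A') ((A : Matrix (Fin a) (Fin a) F) * B' + B * (D' : Matrix (Fin b) (Fin b) F))
        (D * D') := by
  refine Units.ext ?_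
  change bmat F h _ _ _ _ * bmat F h _ _ _ _ = bmat F h _ _ _ _
  simp [bmat_mul]

lemma pElt_diagGL {a b k : ℕ} (h : a + b = k) (s : Fin a → Fˣ) (t : Fin b → Fˣ) :
    pElt F h (diagGL F s) 0 (diagGL F t) = diagGL F (Sum.elim s t ∘ (blockEquiv h).symm) := by
  refine Units.ext ?_
  change (fromBlocks (diagonal _) 0 0 (diagonal _)).submatrix _ _ = diagonal _
  rw [fromBlocks_diagonal, submatrix_diagonal_equiv]
  congr 1
  ext i
  simp only [Function.comp_apply]
  cases (blockEquiv h).symm i <;> rfl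

lemma wSwap_mul_dPow (m n : ℕ) (a : Fˣ) :
    wSwap F m n (m + n) rfl * dPow F (m + n) a =
      pElt F rfl (scalarGL F m (a ^ n) * dPow F m a) 0 (dPow F n a) * wSwap F m n (m + n) rfl := by
  rw [wSwap, dPow, permGL_mul_diagGL, scalarGL_pow_mul_dPow, dPow, pElt_diagGL]
  congr 2
  ext i
  obtain ⟨j, rfl⟩ := (blockEquiv (rfl : m + n = m + n)).surjective i
  cases j <;> simp [blockEquiv, add_comm]

lemma exists_pElt_wSwap_eq_mul_dPow_inv {m n : ℕ} (a : Fˣ) (A : GL (Fin m) F)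
    (B : Matrix (Fin m) (Fin n) F) (D : GL (Fin n) F) {u : GL (Fin (m + n)) F}
    (hu : IsUnip F u) :
    ∃ (A' : GL (Fin m) F) (B' : Matrix (Fin m) (Fin n) F) (D' : GL (Fin n) F)
      (u' : GL (Fin (m + n)) F), IsUnip F u' ∧
      pElt F rfl A B D * wSwap F m n (m + n) rfl * u * (dPow F (m + n) a)⁻¹ =
        pElt F rfl A' B' D' * wSwap F m n (m + n) rfl * u' := by
  have hmove : pElt F rfl A B D * wSwap F m n (m + n) rfl * u * (dPow F (m + n) a)⁻¹ =
      pElt F rfl A B D * pElt F rfl (scalarGL F m (a⁻¹ ^ n) * dPow F m a⁻¹) 0 (dPow F n a⁻¹) *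
        wSwap F m n (m + n) rfl * ((dPow F (m + n) a⁻¹)⁻¹ * u * dPow F (m + n) a⁻¹) := by
    rw [mul_assoc (pElt F rfl A B D) (pElt F rfl _ 0 _), ← wSwap_mul_dPow, dPow_inv]
    group
  rw [hmove, pElt_mul]
  exact ⟨_, _, _, _, hu.conj_dPow a⁻¹, rfl⟩

end Blocks

section InducedWhittaker

variable {F : Type} [Field F] [Fintype F] [DecidableEq F]
  {V W : Type} [AddCommGroup V] [Module ℂ V] [AddCommGroup W] [Module ℂ W]
  {m n k : ℕ} {h : m + n = k} {σ : Representation ℂ (GL (Fin m) F) W}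
  {π : Representation ℂ (GL (Fin n) F) V}

lemma mul_right_mem_IndSpace {f : GL (Fin k) F → W ⊗[ℂ] V} (hf : f ∈ IndSpace h σ π)
    (t : GL (Fin k) F) : (fun g => f (g * t)) ∈ IndSpace h σ π :=
  (IndRep h σ π t ⟨f, hf⟩).2

variable {ψ : AddChar F ℂ} {ξσ : W} {ξπ : V} {f f' : GL (Fin k) F → W ⊗[ℂ] V}

lemma IsInducedWhittakerVector.apply_pElt_wSwap_mul
    (hf : IsInducedWhittakerVector h σ π ψ ξσ ξπ f) (A : GL (Fin m) F)
    (B : Matrix (Fin m) (Fin n) F) (D : GL (Fin n) F) {u : GL (Fin k) F} (hu : IsUnip F u) :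
    f (pElt F h A B D * wSwap F m n k h * u) = psiU ψ u • (σ A ξσ ⊗ₜ[ℂ] π D ξπ) := by
  rw [mul_assoc, hf.1, hf.2.1 u hu, hf.2.2.1, map_smul, TensorProduct.map_tmul]

lemma IsInducedWhittakerVector.unique (hf : IsInducedWhittakerVector h σ π ψ ξσ ξπ f)
    (hf' : IsInducedWhittakerVector h σ π ψ ξσ ξπ f') : f = f' := by
  funext g
  by_cases hg : f g = 0 ∧ f' g = 0
  · rw [hg.1, hg.2]
  · obtain ⟨A, B, D, u, hu, rfl⟩ := (not_and_or.mp hg).elim (hf.2.2.2 g) (hf'.2.2.2 g)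
    rw [hf.apply_pElt_wSwap_mul A B D hu, hf'.apply_pElt_wSwap_mul A B D hu]

lemma IsInducedWhittakerVector.smul_mul_dPow {f : GL (Fin (m + n)) F → W ⊗[ℂ] V}
    (hf : IsInducedWhittakerVector rfl σ π ψ ξσ ξπ f) {ω : Fˣ → ℂˣ}
    (hω : HasCentralCharacter σ ω) (a : Fˣ) :
    IsInducedWhittakerVector rfl σ π (ψ.mulShift (a : F)) (σ (dPow F m a) ξσ)
      (π (dPow F n a) ξπ) fun g => ((ω a : ℂ) ^ n)⁻¹ • f (g * dPow F (m + n) a) := by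
  refine ⟨(IndSpace rfl σ π).smul_mem _ (mul_right_mem_IndSpace hf.1 _), fun u hu g => ?_, ?_,
    fun g hg => ?_⟩
  · dsimp only
    rw [apply_mul_mul_dPow_eq_psiU_mulShift_smul hf.2.1 a hu, smul_comm]
  · dsimp only
    rw [wSwap_mul_dPow, hf.1, hf.2.2.1, TensorProduct.map_tmul, map_mul, Module.End.mul_apply,
      hω.apply_scalarGL_pow, TensorProduct.smul_tmul', smul_smul,
      inv_mul_cancel₀ (pow_ne_zero _ (ω a).ne_zero), one_smul]
  · obtain ⟨A, B, D, u, hu, hgd⟩ := hf.2.2.2 _ (right_ne_zero_of_smul hg)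
    rw [eq_mul_inv_of_mul_eq hgd]
    exact exists_pElt_wSwap_eq_mul_dPow_inv a A B D hu

end InducedWhittaker

section Statements

variable (F : Type) [Field F] [Fintype F] [DecidableEq F]

theorem statement4
    (ψ : AddChar F ℂ)
    {n m : ℕ}
    {V W : Type} [AddCommGroup V] [Module ℂ V]
    [AddCommGroup W] [Module ℂ W]
    (π : Representation ℂ (GL (Fin n) F) V) (σ : Representation ℂ (GL (Fin m) F) W)
    (ωσ : Fˣ → ℂˣ)
    (hωσ : HasCentralCharacter σ ωσ)
    (ξπ : V) (ξσ : W)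
    (hξπ : ξπ ≠ 0 ∧ IsWhittakerVector π ψ ξπ)
    (hξσ : ξσ ≠ 0 ∧ IsWhittakerVector σ ψ ξσ)
    (a : Fˣ) :
    (IsWhittakerVector σ (ψ.mulShift (a : F)) (σ (dPow F m a) ξσ) ∧ σ (dPow F m a) ξσ ≠ 0) ∧
    (IsWhittakerVector π (ψ.mulShift (a : F)) (π (dPow F n a) ξπ) ∧ π (dPow F n a) ξπ ≠ 0) ∧
    ∀ (f f' : GL (Fin (m + n)) F → W ⊗[ℂ] V),
      IsInducedWhittakerVector rfl σ π ψ ξσ ξπ f →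
      IsInducedWhittakerVector rfl σ π (ψ.mulShift (a : F)) (σ (dPow F m a) ξσ)
        (π (dPow F n a) ξπ) f' →
      f' = fun g => ((ωσ a : ℂ) ^ n)⁻¹ • f (g * dPow F (m + n) a) :=
  ⟨⟨hξσ.2.apply_dPow a, (map_ne_zero_iff _ (σ.apply_bijective _).injective).mpr hξσ.1⟩,
    ⟨hξπ.2.apply_dPow a, (map_ne_zero_iff _ (π.apply_bijective _).injective).mpr hξπ.1⟩,
    fun _ _ hf hf' => hf'.unique (hf.smul_mul_dPow hωσ a)⟩

end Statements
end GammaFF
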